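/- Let (A, (·,·), R) be an irreducible locally finite root supersystem over a field F of characteristic zero and let Π be a base of R. Then for every finite subset X of Π there is a finite subset Y_X of Π with X ⊆ Y_X such that the form restricted to the subgroup ⟨Y_X⟩ generated by Y_X is nondegenerate. Moreover, if X is connected, then Y_X can be chosen to be connected. -/

import Mathlib

open Pointwise

/-- A symmetric biadditive form with values in `F`. -/
structure IsSymForm {F : Type*} [Field F] {A : Type*} [AddCommGroup A]
    (form : A → A → F) : Prop where
  symm : ∀ a b, form a b = form b a
  add_left : ∀ a b c, form (a + b) c = form a c + form b c

/-- The radical `A⁰` of a form. -/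
def formRadical {F : Type*} [Field F] {A : Type*} [AddCommGroup A]
    (form : A → A → F) : Set A := {a | ∀ b, form a b = 0}

/-- The set of real roots `R_re = {α ∈ R | (α,α) ≠ 0} ∪ {0}`. -/
def reRoots {F : Type*} [Field F] {A : Type*} [AddCommGroup A]
    (form : A → A → F) (R : Set A) : Set A :=
  {α | α ∈ R ∧ form α α ≠ 0} ∪ {0}

/-- The set of nonsingular roots `R_ns = {α ∈ R \ A⁰ | (α,α) = 0} ∪ {0}`. -/
def nsRoots {F : Type*} [Field F] {A : Type*} [AddCommGroup A]
    (form : A → A → F) (R : Set A) : Set A :=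
  {α | α ∈ R ∧ form α α = 0 ∧ α ∉ formRadical form} ∪ {0}

/-- Extended affine root supersystem. -/
structure IsEARS {F : Type*} [Field F] [CharZero F] {A : Type*} [AddCommGroup A]
    (form : A → A → F) (R : Set A) extends IsSymForm form : Prop where
  zero_mem : (0 : A) ∈ R
  closure_eq_top : AddSubgroup.closure R = ⊤
  neg_mem : ∀ α ∈ R, -α ∈ R
  cartan : ∀ α ∈ R, form α α ≠ 0 → ∀ β ∈ R, ∃ k : ℤ, 2 * form α β = (k : F) * form α α
  string : ∀ α ∈ R, form α α ≠ 0 → ∀ β ∈ R, ∃ p q : ℕ,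
      2 * form β α = ((p : F) - (q : F)) * form α α ∧
      (∀ k : ℤ, β + k • α ∈ R ↔ -(p : ℤ) ≤ k ∧ k ≤ (q : ℤ))
  ns_string : ∀ α ∈ R, form α α = 0 → ∀ β ∈ R, form α β ≠ 0 →
      (β - α ∈ R ∨ β + α ∈ R)

/-- Locally finite root supersystem: an EARS with nondegenerate form. -/
def IsLFRSS {F : Type*} [Field F] [CharZero F] {A : Type*} [AddCommGroup A]
    (form : A → A → F) (R : Set A) : Prop :=
  IsEARS form R ∧ ∀ a : A, (∀ b, form a b = 0) → a = 0

/-- `α` and `β` are connected in `X` by a finite chain with consecutive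
elements non-orthogonal. -/
def ConnectedIn {F : Type*} [Field F] {A : Type*} [AddCommGroup A]
    (form : A → A → F) (X : Set A) (α β : A) : Prop :=
  ∃ (n : ℕ) (c : Fin (n + 1) → A), (∀ i, c i ∈ X) ∧ c 0 = α ∧ c (Fin.last n) = β ∧
    ∀ i : Fin n, form (c i.castSucc) (c i.succ) ≠ 0

/-- A connected subset. -/
def IsConnectedSet {F : Type*} [Field F] {A : Type*} [AddCommGroup A]
    (form : A → A → F) (X : Set A) : Prop :=
  ∀ α ∈ X, ∀ β ∈ X, ConnectedIn form X α β

/-- Irreducibility: `R_re ≠ {0}` and `R \ R⁰` is connected. -/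
def IsIrreducibleRSS {F : Type*} [Field F] {A : Type*} [AddCommGroup A]
    (form : A → A → F) (R : Set A) : Prop :=
  reRoots form R ≠ {0} ∧ IsConnectedSet form (R \ formRadical form)

/-- Sub-supersystem of a locally finite root supersystem. -/
def IsSubSupersystem {F : Type*} [Field F] {A : Type*} [AddCommGroup A]
    (form : A → A → F) (R S : Set A) : Prop :=
  S ⊆ R ∧
  (∀ a ∈ AddSubgroup.closure S, (∀ b ∈ AddSubgroup.closure S, form a b = 0) → a = 0) ∧
  (0 : A) ∈ S ∧
  (∀ α ∈ S, form α α ≠ 0 → ∀ β ∈ S, ∀ k : ℤ,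
      2 * form β α = (k : F) * form α α → β - k • α ∈ S) ∧
  (∀ γ ∈ S, form γ γ = 0 → ∀ β ∈ S, form β γ ≠ 0 → (γ - β ∈ S ∨ γ + β ∈ S))

/-- `Π` is an integral base of `R` (a `ℤ`-basis of the group generated by `R`). -/
def IsIntegralBase {F : Type*} [Field F] {A : Type*} [AddCommGroup A]
    (form : A → A → F) (R P : Set A) : Prop :=
  P ⊆ R ∧ LinearIndependent ℤ (fun p : P => (p : A)) ∧
    Submodule.span ℤ P = Submodule.span ℤ R

/-- `Π` is a base of `R`. -/
def IsBase {F : Type*} [Field F] {A : Type*} [AddCommGroup A]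
    (form : A → A → F) (R P : Set A) : Prop :=
  IsIntegralBase form R P ∧
  ∀ α ∈ R \ formRadical form, ∃ (n : ℕ) (a : Fin n → A) (r : Fin n → ℤ),
    (∀ i, a i ∈ P) ∧ (∀ i, r i = 1 ∨ r i = -1) ∧
    α = ∑ i, r i • a i ∧
    ∀ t : Fin n, (∑ i ∈ Finset.Iic t, r i • a i) ∈ R \ formRadical form

/-!
For a finite `s ⊆ Π`, measure the degeneracy of the form on `⟨s⟩` by the ℚ-space of formal
rational combinations of `s` orthogonal to `s`. A nonzero such combination, after clearing
denominators, is a nonzero element of `⟨s⟩` (as `Π` is linearly independent); since the form is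
nondegenerate on `A = ⟨Π⟩`, it pairs nontrivially with some `β ∈ Π`. Adjoining `β` to `s` strictly
lowers the dimension of that space, and keeps `s` connected because `β` is not orthogonal to `s`.
When the space vanishes, the form is nondegenerate on `⟨s⟩`.
-/

namespace IsSymForm

variable {F : Type*} [Field F] {A : Type*} [AddCommGroup A] {form : A → A → F}

def toAddMonoidHom (h : IsSymForm form) (b : A) : A →+ F :=
  AddMonoidHom.mk' (form · b) (h.add_left · · b)

lemma zero_left (h : IsSymForm form) (b : A) : form 0 b = 0 :=
  map_zero (h.toAddMonoidHom b)

lemma zsmul_left (h : IsSymForm form) (n : ℤ) (a b : A) : form (n • a) b = n * form a b := by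
  simpa [toAddMonoidHom] using map_zsmul (h.toAddMonoidHom b) n a

lemma eq_zero_of_closure_eq_top (h : IsSymForm form) {P : Set A}
    (hP : AddSubgroup.closure P = ⊤) {a : A} (ha : ∀ p ∈ P, form a p = 0) (b : A) :
    form a b = 0 := by
  have hker : AddSubgroup.closure P ≤ (h.toAddMonoidHom a).ker :=
    (AddSubgroup.closure_le _).mpr fun p hp => by simp [toAddMonoidHom, h.symm p, ha p hp]
  rw [hP] at hker
  simpa [toAddMonoidHom, h.symm b] using hker (AddSubgroup.mem_top b)

end IsSymForm

section Connected

variable {F : Type*} [Field F] {A : Type*} [AddCommGroup A] {form : A → A → F}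
  {X Y : Set A} {α β γ : A}

lemma ConnectedIn.mono (hXY : X ⊆ Y) (h : ConnectedIn form X α β) : ConnectedIn form Y α β :=
  let ⟨n, c, hc, h0, hl, hadj⟩ := h
  ⟨n, c, fun i => hXY (hc i), h0, hl, hadj⟩

lemma ConnectedIn.refl (hα : α ∈ X) : ConnectedIn form X α α :=
  ⟨0, fun _ => α, fun _ => hα, rfl, rfl, fun i => i.elim0⟩

lemma ConnectedIn.symm (hform : ∀ a b, form a b = form b a) (h : ConnectedIn form X α β) :
    ConnectedIn form X β α := by
  obtain ⟨n, c, hc, h0, hl, hadj⟩ := h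
  refine ⟨n, c ∘ Fin.rev, fun i => hc _, by simp [hl], by simp [h0], fun i => ?_⟩
  simpa [Fin.rev_castSucc, Fin.rev_succ, hform] using hadj i.rev

lemma ConnectedIn.snoc (hγ : γ ∈ X) (hβγ : form β γ ≠ 0) (h : ConnectedIn form X α β) :
    ConnectedIn form X α γ := by
  obtain ⟨n, c, hc, h0, hl, hadj⟩ := h
  refine ⟨n + 1, Fin.snoc c γ, Fin.lastCases (by simpa) (by simpa), by simpa using h0, by simp,
    Fin.lastCases (by simpa [hl] using hβγ) fun j => ?_⟩
  rw [Fin.succ_castSucc, Fin.snoc_castSucc, Fin.snoc_castSucc]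
  exact hadj j

lemma IsConnectedSet.insert_of_form_ne_zero (hform : ∀ a b, form a b = form b a)
    (hX : IsConnectedSet form X) {p : A} (hp : p ∈ X) (hpβ : form p β ≠ 0) :
    IsConnectedSet form (insert β X) := by
  have hsub : X ⊆ insert β X := Set.subset_insert β X
  have toβ : ∀ α ∈ X, ConnectedIn form (insert β X) α β := fun α hα =>
    ((hX α hα p hp).mono hsub).snoc (Set.mem_insert β X) hpβ
  rintro α (rfl | hα) γ (rfl | hγ)
  · exact .refl (Set.mem_insert _ X)
  · exact (toβ γ hγ).symm hform
  · exact toβ α hα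
  · exact (hX α hα γ hγ).mono hsub

end Connected

section RationalRadical

variable {F : Type*} [Field F] [CharZero F] {A : Type*} {form : A → A → F}

variable (A) in
noncomputable abbrev intToRat : (A →₀ ℤ) →ₗ[ℤ] (A →₀ ℚ) :=
  Finsupp.mapRange.linearMap (Algebra.linearMap ℤ ℚ)

lemma support_intToRat (l : A →₀ ℤ) : (intToRat A l).support = l.support :=
  Finsupp.support_mapRange_of_injective (map_zero _) _ (algebraMap ℤ ℚ).injective_int

variable (form) in
/-- The pairing of `p` with the formal combination `∑ q, c q • q`. -/
noncomputable def ratPairing (p : A) : (A →₀ ℚ) →ₗ[ℚ] F :=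
  Finsupp.linearCombination ℚ (form · p)

variable (form) in
noncomputable def ratRadical (s : Finset A) : Submodule ℚ (A →₀ ℚ) :=
  Finsupp.supported ℚ ℚ ↑s ⊓ ⨅ p ∈ s, LinearMap.ker (ratPairing form p)

lemma mem_ratRadical {s : Finset A} {c : A →₀ ℚ} :
    c ∈ ratRadical form s ↔ c ∈ Finsupp.supported ℚ ℚ ↑s ∧ ∀ p ∈ s, ratPairing form p c = 0 := by
  simp [ratRadical]

instance (s : Finset A) : FiniteDimensional ℚ (ratRadical form s) :=
  have : FiniteDimensional ℚ (Finsupp.supported ℚ ℚ (↑s : Set A)) :=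
    (Finsupp.supportedEquivFinsupp (↑s : Set A)).symm.finiteDimensional
  Submodule.finiteDimensional_of_le inf_le_left

lemma ratPairing_eq_sum {s : Finset A} {c : A →₀ ℚ} (hc : c ∈ Finsupp.supported ℚ ℚ ↑s)
    (p : A) : ratPairing form p c = ∑ q ∈ s, c q • form q p := by
  rw [ratPairing, Finsupp.linearCombination_apply,
    Finsupp.sum_of_support_subset c (by simpa [Finsupp.mem_supported] using hc) _ (by simp)]

lemma exists_form_ne_zero_of_ratPairing_ne_zero {s : Finset A} {c : A →₀ ℚ}
    (hc : c ∈ Finsupp.supported ℚ ℚ ↑s) {β : A} (hβ : ratPairing form β c ≠ 0) :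
    ∃ p ∈ s, form p β ≠ 0 := by
  rw [ratPairing_eq_sum hc] at hβ
  obtain ⟨p, hp, hne⟩ := Finset.exists_ne_zero_of_sum_ne_zero hβ
  exact ⟨p, hp, right_ne_zero_of_smul hne⟩

variable [AddCommGroup A]

lemma ratPairing_intToRat (hform : IsSymForm form) (l : A →₀ ℤ) (p : A) :
    ratPairing form p (intToRat A l) = form (Finsupp.linearCombination ℤ id l) p := by
  induction l using Finsupp.induction_linear with
  | zero => simp [hform.zero_left]
  | add l l' hl hl' => simp only [map_add, hl, hl', hform.add_left]
  | single q n => simp [intToRat, ratPairing, hform.zsmul_left, Rat.smul_def]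

lemma sum_smul_ratPairing_comm (hform : IsSymForm form) {s t : Finset A} {c c' : A →₀ ℚ}
    (hc : c ∈ Finsupp.supported ℚ ℚ ↑s) (hc' : c' ∈ Finsupp.supported ℚ ℚ ↑t) :
    ∑ p ∈ s, c p • ratPairing form p c' = ∑ q ∈ t, c' q • ratPairing form q c := by
  simp only [ratPairing_eq_sum hc, ratPairing_eq_sum hc', Finset.smul_sum]
  rw [Finset.sum_comm]
  refine Finset.sum_congr rfl fun q _ => Finset.sum_congr rfl fun p _ => ?_
  rw [smul_comm, hform.symm]

lemma ratRadical_insert_lt [DecidableEq A] (hform : IsSymForm form) {s : Finset A}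
    {c : A →₀ ℚ} (hc : c ∈ ratRadical form s) {β : A} (hβ : ratPairing form β c ≠ 0) :
    ratRadical form (insert β s) < ratRadical form s := by
  rw [mem_ratRadical] at hc
  have hβs : β ∉ s := fun h => hβ (hc.2 β h)
  refine lt_of_le_of_ne (fun c' hc' => ?_) fun heq => hβ ?_
  · rw [mem_ratRadical] at hc' ⊢
    -- Pair `c` against `c'` both ways: only the coefficient of `β` survives.
    have hc'β : c' β = 0 := by
      have key := sum_smul_ratPairing_comm hform hc.1 hc'.1
      rw [Finset.sum_eq_zero fun p hp => by rw [hc'.2 p (Finset.mem_insert_of_mem hp), smul_zero],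
        Finset.sum_insert hβs, Finset.sum_eq_zero fun q hq => by rw [hc.2 q hq, smul_zero],
        add_zero, eq_comm, smul_eq_zero] at key
      exact key.resolve_right hβ
    refine ⟨?_, fun p hp => hc'.2 p (Finset.mem_insert_of_mem hp)⟩
    rw [Finsupp.mem_supported] at hc' ⊢
    intro q hq
    have hqβ : q ≠ β := by rintro rfl; exact (Finsupp.mem_support_iff.mp hq) hc'β
    simpa [hqβ] using hc'.1 hq
  · have hc_mem : c ∈ ratRadical form (insert β s) := heq ▸ mem_ratRadical.mpr hc
    exact (mem_ratRadical.mp hc_mem).2 β (Finset.mem_insert_self β s)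

lemma exists_ratPairing_ne_zero (hform : IsSymForm form)
    (hnd : ∀ a : A, (∀ b, form a b = 0) → a = 0)
    {P : Set A} (hP : AddSubgroup.closure P = ⊤) (hPli : LinearIndepOn ℤ id P)
    {c : A →₀ ℚ} (hcP : c ∈ Finsupp.supported ℚ ℚ P) (hc : c ≠ 0) :
    ∃ β ∈ P, ratPairing form β c ≠ 0 := by
  by_contra! h
  -- Clear denominators: `d • c` is the image of an integer vector `l`.
  obtain ⟨⟨l, d⟩, hld : d • c = intToRat A l⟩ :=
    IsLocalizedModule.surj (nonZeroDivisors ℤ) (intToRat A) c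
  have hl : l ∈ Finsupp.supported ℤ ℤ P := by
    rw [Finsupp.mem_supported] at hcP
    rw [Finsupp.mem_supported, ← support_intToRat, ← hld]
    exact (Finset.coe_subset.mpr Finsupp.support_smul).trans hcP
  have hv : Finsupp.linearCombination ℤ id l = 0 :=
    hnd _ (hform.eq_zero_of_closure_eq_top hP fun β hβ => by
      rw [← ratPairing_intToRat hform, ← hld, Submonoid.smul_def, map_zsmul, h β hβ, smul_zero])
  have hdc : (d : ℤ) • c = 0 := by
    rw [← Submonoid.smul_def, hld, linearIndepOn_iff.mp hPli l hl hv, map_zero]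
  exact hc ((smul_eq_zero.mp hdc).resolve_left (nonZeroDivisors.coe_ne_zero d))

lemma eq_zero_of_ratRadical_eq_bot (hform : IsSymForm form) {t : Finset A}
    (ht : ratRadical form t = ⊥) :
    ∀ a ∈ AddSubgroup.closure (t : Set A),
      (∀ b ∈ AddSubgroup.closure (t : Set A), form a b = 0) → a = 0 := by
  intro a ha hat
  rw [← Submodule.span_int_eq_addSubgroupClosure, Submodule.mem_toAddSubgroup,
    ← Set.image_id (t : Set A), Finsupp.mem_span_image_iff_linearCombination] at ha
  obtain ⟨l, hl, rfl⟩ := ha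
  have hmem : intToRat A l ∈ ratRadical form t := by
    refine mem_ratRadical.mpr ⟨?_, fun p hp => ?_⟩
    · rwa [Finsupp.mem_supported, support_intToRat]
    · rw [ratPairing_intToRat hform]
      exact hat p (AddSubgroup.subset_closure hp)
  rw [ht, Submodule.mem_bot, ← Finsupp.support_eq_empty, support_intToRat,
    Finsupp.support_eq_empty] at hmem
  rw [hmem, map_zero]

end RationalRadical

lemma exists_superset_ratRadical_eq_bot {F : Type*} [Field F] [CharZero F] {A : Type*}
    [AddCommGroup A] [DecidableEq A] {form : A → A → F} (hform : IsSymForm form)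
    (hnd : ∀ a : A, (∀ b, form a b = 0) → a = 0) {P : Set A} (hP : AddSubgroup.closure P = ⊤)
    (hPli : LinearIndepOn ℤ id P) (s : Finset A) (hsP : ↑s ⊆ P) :
    ∃ t : Finset A, s ⊆ t ∧ ↑t ⊆ P ∧ ratRadical form t = ⊥ ∧
      (IsConnectedSet form ↑s → IsConnectedSet form ↑t) := by
  induction hd : Module.finrank ℚ (ratRadical form s) using Nat.strong_induction_on
    generalizing s with
  | _ d ih =>
  by_cases hbot : ratRadical form s = ⊥
  · exact ⟨s, subset_rfl, hsP, hbot, id⟩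
  obtain ⟨c, hc, hc0⟩ := (Submodule.ne_bot_iff _).mp hbot
  have hcs := (mem_ratRadical.mp hc).1
  obtain ⟨β, hβP, hβ⟩ :=
    exists_ratPairing_ne_zero hform hnd hP hPli (Finsupp.supported_mono hsP hcs) hc0
  obtain ⟨t, hst, htP, htbot, htconn⟩ :=
    ih _ (hd ▸ Submodule.finrank_lt_finrank_of_lt (ratRadical_insert_lt hform hc hβ))
      (insert β s) (by simpa [Set.insert_subset_iff] using ⟨hβP, hsP⟩) rfl
  refine ⟨t, (Finset.subset_insert β s).trans hst, htP, htbot, fun hconn => htconn ?_⟩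
  obtain ⟨p, hp, hpβ⟩ := exists_form_ne_zero_of_ratPairing_ne_zero hcs hβ
  simpa using hconn.insert_of_form_ne_zero hform.symm hp hpβ

theorem stmt17_general {F : Type*} [Field F] [CharZero F] {A : Type*} [AddCommGroup A]
    (form : A → A → F) (R : Set A) (h : IsLFRSS form R)
    (P : Set A) (hP : IsBase form R P) :
    ∀ X : Set A, X ⊆ P → X.Finite →
      (∃ Y : Set A, Y ⊆ P ∧ Y.Finite ∧ X ⊆ Y ∧
        ∀ a ∈ AddSubgroup.closure Y, (∀ b ∈ AddSubgroup.closure Y, form a b = 0) → a = 0) ∧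
      (IsConnectedSet form X →
        ∃ Y : Set A, Y ⊆ P ∧ Y.Finite ∧ X ⊆ Y ∧ IsConnectedSet form Y ∧
          ∀ a ∈ AddSubgroup.closure Y, (∀ b ∈ AddSubgroup.closure Y, form a b = 0) → a = 0) := by
  classical
  obtain ⟨hR, hnd⟩ := h
  obtain ⟨⟨-, hPli, hPspan⟩, -⟩ := hP
  have hPtop : AddSubgroup.closure P = ⊤ := by
    rw [← Submodule.span_int_eq_addSubgroupClosure, hPspan,
      Submodule.span_int_eq_addSubgroupClosure, hR.closure_eq_top]
  intro X hXP hX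
  obtain ⟨t, hst, htP, htbot, htconn⟩ := exists_superset_ratRadical_eq_bot hR.toIsSymForm hnd
    hPtop hPli hX.toFinset (by simpa using hXP)
  have hXt : X ⊆ ↑t := by simpa using hst
  have hnondeg := eq_zero_of_ratRadical_eq_bot hR.toIsSymForm htbot
  exact ⟨⟨t, htP, t.finite_toSet, hXt, hnondeg⟩,
    fun hXconn => ⟨t, htP, t.finite_toSet, hXt, htconn (by simpa using hXconn), hnondeg⟩⟩

theorem stmt17 {F : Type*} [Field F] [CharZero F] {A : Type*} [AddCommGroup A]
    (form : A → A → F) (R : Set A) (h : IsLFRSS form R) (hirr : IsIrreducibleRSS form R)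
    (P : Set A) (hP : IsBase form R P) :
    ∀ X : Set A, X ⊆ P → X.Finite →
      (∃ Y : Set A, Y ⊆ P ∧ Y.Finite ∧ X ⊆ Y ∧
        ∀ a ∈ AddSubgroup.closure Y, (∀ b ∈ AddSubgroup.closure Y, form a b = 0) → a = 0) ∧
      (IsConnectedSet form X →
        ∃ Y : Set A, Y ⊆ P ∧ Y.Finite ∧ X ⊆ Y ∧ IsConnectedSet form Y ∧
          ∀ a ∈ AddSubgroup.closure Y, (∀ b ∈ AddSubgroup.closure Y, form a b = 0) → a = 0) :=
  stmt17_general form R h P hP
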